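/- Let d ≥ 2 and define v_n(d) for n ≥ 1 by v_1(d) = 1 and, for n > 1, by the recurrence ∑_{k=1}^{n} C(n-1,k-1) ((2n-2k-1)!!)^{d-1} v_k(d) = ((2n-1)!!)^{d-1}. Then v_n(2) = 2^{n-1}·(n-1)! for all n ≥ 2. -/

import Mathlib

/-!
For `d = 2` the recurrence reads `∑ₖ C(n-1, k-1) (2n-2k-1)!! vₖ = (2n-1)!!`, a unitriangular
linear system for `v₁, …, vₙ`, so it has exactly one solution with `v₁ = 1`. The candidate
`vₖ = 2^(k-1) (k-1)!` solves it: with `m = n - 1` and `i = k - 1`, `C(m, i) 2^i i!` is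
`2^i m(m-1)⋯(m-i+1)`, and `∑ᵢ 2^i m(m-1)⋯(m-i+1) (2m-2i-1)!! = (2m+1)!!` follows by induction on
`m`: every term with `i ≥ 1` of the sum for `m + 1` is `2(m+1)` times a term of the sum for `m`,
and `(2m+3)!! = 2(m+1) (2m+1)!! + (2m+1)!!`.
-/

open Nat

/-- `(2n-1)!! = 1·3·5⋯(2n-1)`, the product of the first `n` odd positive integers. -/
def oddDF (n : ℕ) : ℕ := ∏ i ∈ Finset.range n, (2 * i + 1)

theorem oddDF_succ (n : ℕ) : oddDF (n + 1) = (2 * n + 1) * oddDF n := by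
  rw [oddDF, Finset.prod_range_succ, mul_comm]
  rfl

theorem sum_descFactorial_mul_two_pow_mul_oddDF (m : ℕ) :
    ∑ i ∈ Finset.range (m + 1), m.descFactorial i * 2 ^ i * oddDF (m - i) = oddDF (m + 1) := by
  induction m with
  | zero => simp [oddDF]
  | succ m ih =>
    have hshift : ∀ i ∈ Finset.range (m + 1),
        (m + 1).descFactorial (i + 1) * 2 ^ (i + 1) * oddDF (m + 1 - (i + 1)) =
          2 * (m + 1) * (m.descFactorial i * 2 ^ i * oddDF (m - i)) := by
      intro i _
      rw [succ_descFactorial_succ, Nat.add_sub_add_right, pow_succ]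
      ring
    rw [Finset.sum_range_succ', Finset.sum_congr rfl hshift, ← Finset.mul_sum, ih,
      oddDF_succ (m + 1)]
    simp only [descFactorial_zero, pow_zero, mul_one, Nat.sub_zero, one_mul]
    ring

theorem sum_Icc_one_eq_sum_range {M : Type*} [AddCommMonoid M] (f : ℕ → M) (n : ℕ) :
    ∑ k ∈ Finset.Icc 1 n, f k = ∑ i ∈ Finset.range n, f (i + 1) := by
  rw [Finset.range_eq_Ico, Finset.sum_Ico_add' f 0 n 1]
  rfl

theorem sum_choose_mul_oddDF_mul_two_pow_mul_factorial (m : ℕ) :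
    ∑ k ∈ Finset.Icc 1 (m + 1),
        (m.choose (k - 1) : ℚ) * oddDF (m + 1 - k) * (2 ^ (k - 1) * (k - 1)! : ℚ) =
      oddDF (m + 1) := by
  rw [sum_Icc_one_eq_sum_range, ← sum_descFactorial_mul_two_pow_mul_oddDF, Nat.cast_sum]
  refine Finset.sum_congr rfl fun i _ => ?_
  rw [Nat.add_sub_cancel, Nat.add_sub_add_right, descFactorial_eq_factorial_mul_choose]
  push_cast
  ring

theorem eq_of_unitriangular_sum_eq {R : Type*} [Ring R] (a : ℕ → ℕ → R) {f g : ℕ → R}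
    (hdiag : ∀ n, 1 < n → a n n = 1) (h₁ : f 1 = g 1)
    (hsum : ∀ n, 1 < n →
      ∑ k ∈ Finset.Icc 1 n, a n k * f k = ∑ k ∈ Finset.Icc 1 n, a n k * g k) :
    ∀ n, 1 ≤ n → f n = g n := by
  intro n
  induction n using Nat.strong_induction_on with
  | _ n ih =>
    intro hn
    obtain rfl | hn := hn.eq_or_lt
    · exact h₁
    obtain ⟨m, rfl⟩ : ∃ m, n = m + 1 := ⟨n - 1, by omega⟩
    have hlower : ∑ k ∈ Finset.Icc 1 m, a (m + 1) k * f k =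
        ∑ k ∈ Finset.Icc 1 m, a (m + 1) k * g k :=
      Finset.sum_congr rfl fun k hk => by
        rw [Finset.mem_Icc] at hk
        rw [ih k (by omega) hk.1]
    have htop := hsum (m + 1) hn
    rw [Finset.sum_Icc_succ_top (by omega), Finset.sum_Icc_succ_top (by omega), hlower,
      hdiag _ hn, one_mul, one_mul] at htop
    exact add_left_cancel htop

theorem stmt7 (v : ℕ → ℕ → ℚ)
    (hv1 : ∀ d : ℕ, 2 ≤ d → v d 1 = 1)
    (hrec : ∀ d : ℕ, 2 ≤ d → ∀ n : ℕ, 1 < n →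
      ∑ k ∈ Finset.Icc 1 n,
          ((n - 1).choose (k - 1) : ℚ) * (oddDF (n - k) : ℚ) ^ (d - 1) * v d k =
        (oddDF n : ℚ) ^ (d - 1)) :
    ∀ n : ℕ, 2 ≤ n → v 2 n = 2 ^ (n - 1) * ((n - 1)! : ℚ) := by
  have hsolution : ∀ n, 1 ≤ n → v 2 n = 2 ^ (n - 1) * ((n - 1)! : ℚ) := by
    refine eq_of_unitriangular_sum_eq
      (fun n k => ((n - 1).choose (k - 1) : ℚ) * (oddDF (n - k) : ℚ) ^ (2 - 1))
      (fun n _ => by simp [oddDF]) (by rw [hv1 2 le_rfl]; norm_num) fun n hn => ?_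
    obtain ⟨m, rfl⟩ : ∃ m, n = m + 1 := ⟨n - 1, by omega⟩
    rw [hrec 2 le_rfl _ hn, ← sum_choose_mul_oddDF_mul_two_pow_mul_factorial m]
    simp only [Nat.add_sub_cancel, Nat.reduceSub, pow_one]
  exact fun n hn => hsolution n (by omega)
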